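/- For every integer s ≥ 0, one has L_s(e^φ) = h_s·e^φ + D_s(e^φ). That is, the coherent state e^φ satisfies L_s·coh = 𝓛_s·coh, where 𝓛_s = h_s + D_s is a first-order differential operator in the internal parameters λ_1,…,λ_r. -/

import Mathlib

noncomputable section

-- Variable `i : ℕ` of `A` stands for `x_{i+1}`, and `j : Fin r` for `λ_{j+1}`.
abbrev A : Type := MvPolynomial ℕ ℂ
abbrev B (r : ℕ) : Type := MvPowerSeries (Fin r) A

/-- `a_p := p ∂/∂x_p` on A (gives 0 at p = 0). -/
def aA (p : ℕ) (P : A) : A := ((p : ℂ)) • MvPolynomial.pderiv (p - 1) P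

/-- `L_s = (1/2)∑_{k=0}^{s} a_k a_{s−k} + ∑_{p≥1} a_{−p} a_{s+p} − ρ(s+1) a_s`. -/
def LA (ρ : ℂ) (s : ℕ) (P : A) : A :=
  (1 / 2 : ℂ) • (∑ k ∈ Finset.range (s + 1), aA k (aA (s - k) P))
    + (∑ᶠ p : ℕ, if 1 ≤ p then MvPolynomial.X (p - 1) * aA (s + p) P else 0)
    - (ρ * ((s : ℂ) + 1)) • aA s P

/-- Coefficientwise extension of `L_s` to B. -/
def LB (r : ℕ) (ρ : ℂ) (s : ℕ) (f : B r) : B r :=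
  fun d => LA ρ s (MvPowerSeries.coeff (R := A) d f)

/-- `λ_j` as an element of B (`λ_0 = 0`, `λ_j = 0` for `j > r`). -/
def lamB (r : ℕ) (j : ℕ) : B r :=
  if h : 1 ≤ j ∧ j ≤ r then MvPowerSeries.X (⟨j - 1, by omega⟩ : Fin r) else 0

/-- `h_s := (1/2)∑_{j=0}^{s} λ_j λ_{s−j} − ρ(s+1)λ_s`. -/
def hB (r : ℕ) (ρ : ℂ) (s : ℕ) : B r :=
  (1 / 2 : ℂ) • ∑ j ∈ Finset.range (s + 1), lamB r j * lamB r (s - j)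
    - (ρ * ((s : ℂ) + 1)) • lamB r s

/-- `∂/∂λ_{n+1}` acting coefficientwise on B. -/
def dLam (r : ℕ) (n : Fin r) (f : B r) : B r :=
  fun d => ((d n + 1 : ℕ) : ℂ) • MvPowerSeries.coeff (R := A) (d + Finsupp.single n 1) f

/-- `D_s := ∑_{j=1}^{r−s} j λ_{j+s} ∂/∂λ_j` on B. -/
def DB (r : ℕ) (s : ℕ) (f : B r) : B r :=
  ∑ j : Fin r,
    if h : (j : ℕ) + 1 + s ≤ r then
      (((j : ℕ) + 1 : ℕ) : ℂ) •
        (MvPowerSeries.X (⟨(j : ℕ) + s, by omega⟩ : Fin r) * dLam r j f)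
    else 0

/-- `φ := ∑_{j=1}^r λ_j x_j / j`. -/
def phi (r : ℕ) : B r :=
  ∑ j : Fin r,
    MvPowerSeries.C (σ := Fin r) (R := A)
        (MvPolynomial.C (1 / (((j : ℕ) : ℂ) + 1)) * MvPolynomial.X (j : ℕ))
      * MvPowerSeries.X j

/-- The exponential `∑_{m≥0} f^m/m!` of a series of positive λ-order. -/
def expB (r : ℕ) (f : B r) : B r :=
  fun d => ∑ m ∈ Finset.range (d.sum (fun _ k => k) + 1),
    ((m.factorial : ℂ))⁻¹ • MvPowerSeries.coeff (R := A) d (f ^ m)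

/-!
The `λ^d`-coefficient of `e^φ = ∏ⱼ exp (λⱼ xⱼ / j)` is the monomial `∏ⱼ (xⱼ / j)^{dⱼ} / dⱼ!`.
On these coefficients `a_j` (for `j ≤ r`) lowers `dⱼ` by one, so `e^φ` is a coherent state:
`a_q e^φ = λ_q e^φ` for every `q ≥ 0`; and multiplication by `x_j` raises `dⱼ`, giving
`x_j e^φ = j ∂e^φ/∂λ_j`. Hence `∑ₖ a_k a_{s-k}` and `a_s` act on `e^φ` as multiplication by
`∑ₖ λ_k λ_{s-k}` and `λ_s`, while `∑_p x_p a_{s+p} e^φ = ∑_p λ_{s+p} x_p e^φ = D_s e^φ`.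
-/

namespace CoherentState

open MvPowerSeries Finset

variable {r : ℕ}

def embExp (d : Fin r →₀ ℕ) : ℕ →₀ ℕ := Finsupp.embDomain Fin.valEmbedding d

def cohWeight (d : Fin r →₀ ℕ) : ℂ :=
  ∏ j : Fin r, ((((j : ℕ) : ℂ) + 1) ^ d j * ((d j).factorial : ℂ))⁻¹

def cohCoeff (d : Fin r →₀ ℕ) : A := MvPolynomial.monomial (embExp d) (cohWeight d)

def cohState (r : ℕ) : B r := fun d => cohCoeff d

lemma embExp_apply_val (d : Fin r →₀ ℕ) (j : Fin r) : embExp d (j : ℕ) = d j :=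
  Finsupp.embDomain_apply_self Fin.valEmbedding d j

lemma embExp_apply_of_le (d : Fin r →₀ ℕ) {i : ℕ} (h : r ≤ i) : embExp d i = 0 :=
  Finsupp.embDomain_of_notMem_range _ _ _ (by rintro ⟨j, rfl⟩; exact absurd h (by simp))

lemma embExp_add_single (e : Fin r →₀ ℕ) (j : Fin r) :
    embExp (e + Finsupp.single j 1) = embExp e + Finsupp.single (j : ℕ) 1 := by
  rw [embExp, Finsupp.embDomain_add, Finsupp.embDomain_single]
  rfl

lemma cohWeight_zero : cohWeight (0 : Fin r →₀ ℕ) = 1 := by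
  simp [cohWeight]

lemma cohWeight_add_single (e : Fin r →₀ ℕ) (j : Fin r) :
    ((((j : ℕ) : ℂ) + 1) * ((e j : ℂ) + 1)) * cohWeight (e + Finsupp.single j 1) = cohWeight e := by
  have hrest : ∀ k ∈ univ.erase j, (e + Finsupp.single j 1 : Fin r →₀ ℕ) k = e k := fun k hk => by
    rw [Finsupp.add_apply, Finsupp.single_eq_of_ne (ne_of_mem_erase hk), add_zero]
  unfold cohWeight
  rw [← mul_prod_erase univ _ (mem_univ j), ← mul_prod_erase univ _ (mem_univ j),
    prod_congr rfl fun k hk => by rw [hrest k hk], ← mul_assoc]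
  congr 1
  have hj : (((j : ℕ) : ℂ) + 1) ≠ 0 := Nat.cast_add_one_ne_zero _
  have he : ((e j : ℂ) + 1) ≠ 0 := Nat.cast_add_one_ne_zero _
  simp only [Finsupp.add_apply, Finsupp.single_eq_same, pow_succ, Nat.factorial_succ]
  push_cast
  field_simp

lemma cohCoeff_zero : cohCoeff (0 : Fin r →₀ ℕ) = 1 := by
  rw [cohCoeff, embExp, Finsupp.embDomain_zero, cohWeight_zero, MvPolynomial.monomial_zero',
    MvPolynomial.C_1]

lemma X_mul_cohCoeff (e : Fin r →₀ ℕ) (j : Fin r) :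
    MvPolynomial.X (j : ℕ) * cohCoeff e
      = ((((j : ℕ) : ℂ) + 1) * ((e j : ℂ) + 1)) • cohCoeff (e + Finsupp.single j 1) := by
  rw [cohCoeff, cohCoeff, MvPolynomial.smul_monomial, smul_eq_mul, cohWeight_add_single,
    embExp_add_single, MvPolynomial.X, MvPolynomial.monomial_mul, one_mul, add_comm]

lemma aA_zero_left (P : A) : aA 0 P = 0 := by
  simp [aA]

lemma aA_zero_right (q : ℕ) : aA q (0 : A) = 0 := by
  simp [aA]

lemma aA_monomial (q : ℕ) (u : ℕ →₀ ℕ) (c : ℂ) :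
    aA q (MvPolynomial.monomial u c)
      = MvPolynomial.monomial (u - Finsupp.single (q - 1) 1) ((q : ℂ) * (c * u (q - 1))) := by
  rw [aA, MvPolynomial.pderiv_monomial, MvPolynomial.smul_monomial, smul_eq_mul]

lemma aA_cohCoeff_of_lt {q : ℕ} (h : r < q) (d : Fin r →₀ ℕ) : aA q (cohCoeff d) = 0 := by
  rw [cohCoeff, aA_monomial, embExp_apply_of_le d (by omega)]
  simp

lemma aA_succ_cohCoeff (j : Fin r) (d : Fin r →₀ ℕ) :
    aA ((j : ℕ) + 1) (cohCoeff d)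
      = if Finsupp.single j 1 ≤ d then cohCoeff (d - Finsupp.single j 1) else 0 := by
  split_ifs with h
  · obtain ⟨e, rfl⟩ : ∃ e, d = e + Finsupp.single j 1 := ⟨_, (tsub_add_cancel_of_le h).symm⟩
    rw [add_tsub_cancel_right, cohCoeff, aA_monomial, add_tsub_cancel_right, embExp_add_single,
      add_tsub_cancel_right, Finsupp.add_apply, embExp_apply_val, Finsupp.single_eq_same,
      cohCoeff, ← cohWeight_add_single e j]
    congr 1
    push_cast
    ring
  · have hdj : d j = 0 := by
      by_contra hne
      exact h (Finsupp.single_le_iff.mpr (Nat.one_le_iff_ne_zero.mpr hne))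
    rw [cohCoeff, aA_monomial, add_tsub_cancel_right, embExp_apply_val, hdj]
    simp

def aB (q : ℕ) (f : B r) : B r := fun d => aA q (coeff d f)

lemma coeff_aB (q : ℕ) (f : B r) (d : Fin r →₀ ℕ) : coeff d (aB q f) = aA q (coeff d f) := rfl

lemma coeff_X_mul (i : Fin r) (f : B r) (d : Fin r →₀ ℕ) :
    coeff d (X i * f) = if Finsupp.single i 1 ≤ d then coeff (d - Finsupp.single i 1) f else 0 := by
  rw [X_def, coeff_monomial_mul, one_mul]

lemma lamB_succ (j : Fin r) : lamB r ((j : ℕ) + 1) = X j := by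
  rw [lamB, dif_pos ⟨by omega, j.isLt⟩]
  rfl

lemma lamB_of_lt {q : ℕ} (h : r < q) : lamB r q = 0 := by
  rw [lamB, dif_neg (by omega)]

lemma aB_X_mul (q : ℕ) (i : Fin r) (f : B r) : aB q (X i * f) = X i * aB q f := by
  ext d : 1
  rw [coeff_aB, coeff_X_mul, coeff_X_mul, apply_ite (aA q), aA_zero_right, coeff_aB]

lemma aB_lamB_mul (q k : ℕ) (f : B r) : aB q (lamB r k * f) = lamB r k * aB q f := by
  unfold lamB
  split_ifs
  · exact aB_X_mul q _ f
  · ext d : 1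
    simp [coeff_aB, aA_zero_right]

theorem aB_cohState (q : ℕ) : aB q (cohState r) = lamB r q * cohState r := by
  ext d : 1
  rcases Nat.lt_or_ge r q with hq | hq
  · rw [coeff_aB, lamB_of_lt hq, zero_mul, map_zero]
    exact aA_cohCoeff_of_lt hq d
  rcases q with _ | q
  · rw [coeff_aB, aA_zero_left, lamB, dif_neg (by omega), zero_mul, map_zero]
  · obtain ⟨j, rfl⟩ : ∃ j : Fin r, (j : ℕ) = q := ⟨⟨q, hq⟩, rfl⟩
    rw [coeff_aB, lamB_succ, coeff_X_mul]
    exact aA_succ_cohCoeff j d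

theorem C_X_mul_cohState (j : Fin r) :
    C (MvPolynomial.X (j : ℕ) : A) * cohState r
      = (((j : ℕ) + 1 : ℕ) : ℂ) • dLam r j (cohState r) := by
  ext d : 1
  rw [coeff_C_mul]
  change MvPolynomial.X (j : ℕ) * cohCoeff d
    = (((j : ℕ) + 1 : ℕ) : ℂ) • (((d j + 1 : ℕ) : ℂ) • cohCoeff (d + Finsupp.single j 1))
  rw [X_mul_cohCoeff, smul_smul]
  push_cast
  rfl

lemma finsum_eq_sum_fin {M : Type*} [AddCommMonoid M] {g : ℕ → M} (hg : ∀ p, r < p → g p = 0) :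
    (∑ᶠ p : ℕ, if 1 ≤ p then g p else 0) = ∑ j : Fin r, g ((j : ℕ) + 1) := by
  have hsupp : (Function.support fun p : ℕ => if 1 ≤ p then g p else 0) ⊆ ↑(range (r + 1)) := by
    intro p hp
    by_contra hpr
    simp only [coe_range, Set.mem_Iio, not_lt] at hpr
    exact hp (by simp only [hg p (by omega), ite_self])
  rw [finsum_eq_finsetSum_of_support_subset _ hsupp, sum_range_succ', if_neg (by omega), add_zero,
    ← Fin.sum_univ_eq_sum_range]
  simp

lemma coeff_complex_smul (c : ℂ) (f : B r) (d : Fin r →₀ ℕ) : coeff d (c • f) = c • coeff d f :=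
  rfl

lemma LB_eq_of_aB_eq_zero (ρ : ℂ) (s : ℕ) {f : B r} (hf : ∀ q, r < q → aB q f = 0) :
    LB r ρ s f
      = (1 / 2 : ℂ) • ∑ k ∈ range (s + 1), aB k (aB (s - k) f)
        + ∑ j : Fin r, C (MvPolynomial.X (j : ℕ) : A) * aB (s + ((j : ℕ) + 1)) f
        - (ρ * ((s : ℂ) + 1)) • aB s f := by
  ext d : 1
  have hfin : ∀ p, r < p → MvPolynomial.X (p - 1) * aA (s + p) (coeff d f) = 0 := fun p hp => by
    rw [← coeff_aB, hf _ (by omega), map_zero, mul_zero]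
  rw [map_sub, map_add, map_sum, coeff_complex_smul, coeff_complex_smul, map_sum]
  change LA ρ s (coeff d f) = _
  rw [LA, finsum_eq_sum_fin hfin]
  simp only [coeff_aB, coeff_C_mul, Nat.add_sub_cancel]

lemma DB_eq (s : ℕ) (f : B r) :
    DB r s f
      = ∑ j : Fin r, lamB r (s + ((j : ℕ) + 1)) * ((((j : ℕ) + 1 : ℕ) : ℂ) • dLam r j f) := by
  refine sum_congr rfl fun j _ => ?_
  split_ifs with h
  · rw [lamB, dif_pos ⟨by omega, by omega⟩, mul_smul_comm]
    congr 3
    exact Fin.ext (by simp only; omega)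
  · rw [lamB, dif_neg (by omega), zero_mul]

lemma coeff_phi_mul (g : B r) (d : Fin r →₀ ℕ) :
    coeff d (phi r * g)
      = ∑ j : Fin r, if Finsupp.single j 1 ≤ d then
          (1 / (((j : ℕ) : ℂ) + 1)) • (MvPolynomial.X (j : ℕ) * coeff (d - Finsupp.single j 1) g)
          else 0 := by
  rw [phi, sum_mul, map_sum]
  refine sum_congr rfl fun j _ => ?_
  rw [mul_assoc, coeff_C_mul, coeff_X_mul, mul_ite, mul_zero, mul_assoc, MvPolynomial.C_mul']

lemma smul_X_mul_cohCoeff_sub_single (j : Fin r) (d : Fin r →₀ ℕ) :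
    (if Finsupp.single j 1 ≤ d then
      (1 / (((j : ℕ) : ℂ) + 1)) • (MvPolynomial.X (j : ℕ) * cohCoeff (d - Finsupp.single j 1))
      else 0) = (d j : ℂ) • cohCoeff d := by
  split_ifs with h
  · obtain ⟨e, rfl⟩ : ∃ e, d = e + Finsupp.single j 1 := ⟨_, (tsub_add_cancel_of_le h).symm⟩
    have hj : (((j : ℕ) : ℂ) + 1) ≠ 0 := Nat.cast_add_one_ne_zero _
    rw [add_tsub_cancel_right, X_mul_cohCoeff, smul_smul, Finsupp.add_apply, Finsupp.single_eq_same]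
    congr 1
    field_simp
    push_cast
    ring
  · have hdj : d j = 0 := by
      by_contra hne
      exact h (Finsupp.single_le_iff.mpr (Nat.one_le_iff_ne_zero.mpr hne))
    rw [hdj, Nat.cast_zero, zero_smul]

theorem coeff_phi_pow (m : ℕ) (d : Fin r →₀ ℕ) :
    coeff d (phi r ^ m) = if d.degree = m then (m.factorial : ℂ) • cohCoeff d else 0 := by
  induction m generalizing d with
  | zero =>
    simp only [pow_zero, coeff_one, Finsupp.degree_eq_zero_iff]
    split_ifs with hd
    · rw [hd, cohCoeff_zero, Nat.factorial_zero, Nat.cast_one, one_smul]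
    · rfl
  | succ m ih =>
    have hterm : ∀ j : Fin r,
        (if Finsupp.single j 1 ≤ d then
          (1 / (((j : ℕ) : ℂ) + 1)) •
            (MvPolynomial.X (j : ℕ) * coeff (d - Finsupp.single j 1) (phi r ^ m))
          else 0)
          = if d.degree = m + 1 then (m.factorial : ℂ) • (d j : ℂ) • cohCoeff d else 0 := by
      intro j
      rw [← smul_X_mul_cohCoeff_sub_single]
      by_cases hj : Finsupp.single j 1 ≤ d
      · have hdeg : (d - Finsupp.single j 1).degree + 1 = d.degree := by
          conv_rhs => rw [← tsub_add_cancel_of_le hj]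
          rw [map_add, Finsupp.degree_single]
        simp only [if_pos hj, ih, ← hdeg, add_left_inj]
        split_ifs <;> simp [smul_comm (m.factorial : ℂ)]
      · simp [hj]
    rw [pow_succ', coeff_phi_mul, sum_congr rfl fun j _ => hterm j]
    split_ifs with hd
    · rw [← smul_sum, ← sum_smul, ← Nat.cast_sum, ← Finsupp.degree_eq_sum, hd, smul_smul,
        Nat.factorial_succ, Nat.cast_mul, mul_comm ((m + 1 : ℕ) : ℂ)]
    · rw [sum_const_zero]

theorem expB_phi_eq_cohState : expB r (phi r) = cohState r := by
  ext d : 1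
  change ∑ m ∈ range (d.degree + 1), ((m.factorial : ℂ))⁻¹ • coeff d (phi r ^ m) = cohCoeff d
  rw [sum_eq_single_of_mem d.degree (self_mem_range_succ _)
      fun m _ hm => by rw [coeff_phi_pow, if_neg (Ne.symm hm), smul_zero],
    coeff_phi_pow, if_pos rfl, smul_smul,
    inv_mul_cancel₀ (Nat.cast_ne_zero.mpr (Nat.factorial_ne_zero _)), one_smul]

end CoherentState

open CoherentState in
theorem statement12_general (r : ℕ) (ρ : ℂ) (s : ℕ) :
    LB r ρ s (expB r (phi r))
      = hB r ρ s * expB r (phi r) + DB r s (expB r (phi r)) := by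
  have hvanish : ∀ q, r < q → aB q (cohState r) = 0 := fun q hq => by
    rw [aB_cohState, lamB_of_lt hq, zero_mul]
  rw [expB_phi_eq_cohState, LB_eq_of_aB_eq_zero ρ s hvanish, DB_eq]
  simp only [aB_cohState, aB_lamB_mul, ← C_X_mul_cohState, hB, sub_mul, smul_mul_assoc,
    Finset.sum_mul, mul_assoc, mul_left_comm (lamB r _) (lamB r _),
    mul_left_comm (MvPowerSeries.C _) (lamB r _)]
  abel

theorem statement12 (r : ℕ) (hr : 1 ≤ r) (ρ : ℂ) (s : ℕ) :
    LB r ρ s (expB r (phi r))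
      = hB r ρ s * expB r (phi r) + DB r s (expB r (phi r)) :=
  statement12_general r ρ s

end
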